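/- Algorithm ANY WALK returns, for each node v' reachable from v by a path with label in L(regex), exactly one such path; i.e., the set ReachedFinal at termination equals { v' | ∃ path from v to v' in G with label in L(regex) }, and exactly one path per element of ReachedFinal is output. -/

import Mathlib

/-- A graph database: edges with source, target, and label. -/
structure GraphDB (V E S : Type) where
  src : E → V
  tgt : E → V
  lab : E → S

/-- An NFA with transition relation `δ ⊆ Q × Σ × Q`, initial state `q0`, final states `F`. -/
structure NFAx (Q S : Type) where
  δ : Set (Q × S × Q)
  q0 : Q
  F : Set Q

/-- `A.Run q w q'`: the automaton can read word `w` going from state `q` to state `q'`. -/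
inductive NFAx.Run {Q S : Type} (A : NFAx Q S) : Q → List S → Q → Prop
  | nil (q : Q) : A.Run q [] q
  | cons {q q' q'' : Q} {a : S} {w : List S} :
      (q, a, q') ∈ A.δ → A.Run q' w q'' → A.Run q (a :: w) q''

/-- The language accepted by the NFA. -/
def NFAx.Lang {Q S : Type} (A : NFAx Q S) : Set (List S) :=
  {w | ∃ qf ∈ A.F, A.Run A.q0 w qf}

/-- `G.IsWalk v es w`: the edge list `es` forms a walk from `v` to `w` in `G`. -/
def GraphDB.IsWalk {V E S : Type} (G : GraphDB V E S) : V → List E → V → Prop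
  | v, [], w => v = w
  | v, e :: es, w => G.src e = v ∧ G.IsWalk (G.tgt e) es w

/-- Distance (minimum number of edges over all walks), `⊤` if unreachable. -/
noncomputable def GraphDB.dist {V E S : Type} (G : GraphDB V E S) (v w : V) : ℕ∞ :=
  sInf {n : ℕ∞ | ∃ es : List E, G.IsWalk v es w ∧ (es.length : ℕ∞) = n}

/-- Edges of the product graph: pairs of a `G`-edge and a compatible transition. -/
def ProdE {V E Q S : Type} (G : GraphDB V E S) (A : NFAx Q S) : Type :=
  {p : E × Q × S × Q // p.2 ∈ A.δ ∧ G.lab p.1 = p.2.2.1}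

/-- The product graph `G×` of a graph database `G` and an NFA `A`. -/
def ProdGraph {V E Q S : Type} (G : GraphDB V E S) (A : NFAx Q S) :
    GraphDB (V × Q) (ProdE G A) S where
  src p := (G.src p.1.1, p.1.2.1)
  tgt p := (G.tgt p.1.1, p.1.2.2.2)
  lab p := G.lab p.1.1

/-- Projection of a product-graph edge to the underlying `G`-edge. -/
def projE {V E Q S : Type} {G : GraphDB V E S} {A : NFAx Q S} (p : ProdE G A) : E := p.1.1

/-- `IsNWalk adj v xs w`: `xs` is the list of successive nodes of a walk from `v` to `w`. -/
def IsNWalk {V : Type} (adj : V → List V) : V → List V → V → Prop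
  | v, [], w => v = w
  | v, x :: xs, w => x ∈ adj v ∧ IsNWalk adj x xs w

/-- BFS distance: minimum number of edges over all walks, `⊤` if unreachable. -/
noncomputable def ndist {V : Type} (adj : V → List V) (s u : V) : ℕ∞ :=
  sInf {n : ℕ∞ | ∃ xs : List V, IsNWalk adj s xs u ∧ (xs.length : ℕ∞) = n}

/-- BFS main loop (fuelled): returns the dequeue order of nodes. -/
def bfsAux {V : Type} [DecidableEq V] (adj : V → List V) :
    ℕ → List V → List V → List V
  | 0, _, _ => []
  | _ + 1, [], _ => []
  | fuel + 1, u :: qs, vis =>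
      let news := ((adj u).filter (fun x => !vis.contains x)).dedup
      u :: bfsAux adj fuel (qs ++ news) (vis ++ news)

/-- The order in which BFS from `s` dequeues (expands) the nodes. -/
def bfsOrder {V : Type} [DecidableEq V] [Fintype V] (adj : V → List V) (s : V) : List V :=
  bfsAux adj (Fintype.card V + 1) [s] [s]

/-- BFS main loop recording parent pointers: `(x, u)` means `x` was discovered from `u`. -/
def bfsPar {V : Type} [DecidableEq V] (adj : V → List V) :
    ℕ → List V → List V → List (V × V) → List (V × V)
  | 0, _, _, par => par
  | _ + 1, [], _, par => par
  | fuel + 1, u :: qs, vis, par =>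
      let news := ((adj u).filter (fun x => !vis.contains x)).dedup
      bfsPar adj fuel (qs ++ news) (vis ++ news) (par ++ news.map (fun x => (x, u)))

/-- Parent pointers produced by BFS from `s`. -/
def bfsParents {V : Type} [DecidableEq V] [Fintype V] (adj : V → List V) (s : V) :
    List (V × V) :=
  bfsPar adj (Fintype.card V + 1) [s] [s] []

/-- Length of the path from `s` to `u` obtained by following parent pointers. -/
def parentDepth {V : Type} [DecidableEq V] (par : List (V × V)) (s : V) : ℕ → V → Option ℕ
  | 0, _ => none
  | fuel + 1, u =>
      if u = s then some 0
      else match par.lookup u with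
        | some w => (parentDepth par s fuel w).map (· + 1)
        | none => none

/-!
A walk in the product graph from `(v, q₀)` to `(v', q')` is exactly a walk from `v` to `v'` in
`G` together with a run of `A` from `q₀` to `q'` on its label, so `v'` is answer-reachable iff
some `(v', q')` with `q' ∈ F` is reachable from `(v, q₀)`. It remains to see that the BFS visits
precisely the nodes reachable from its source. Soundness: every enqueued node is reachable.
Completeness: every visited node is expanded or still queued, and every successor of an expanded
node is visited; the fuel `card V + 1` suffices because each round either shortens the queue or
enlarges the duplicate-free visited list. Choosing a witness walk for each `v'` gives the outputs.
-/

section Reachability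
variable {V : Type} (adj : V → List V)

theorem IsNWalk.snoc {s u y : V} {xs : List V} (h : IsNWalk adj s xs u) (hy : y ∈ adj u) :
    IsNWalk adj s (xs ++ [y]) y := by
  induction xs generalizing s with
  | nil => cases (h : s = u); exact ⟨hy, rfl⟩
  | cons a as ih => exact ⟨h.1, ih h.2⟩

theorem IsNWalk.mem_of_closed {P : V → Prop} (hP : ∀ u, P u → ∀ y ∈ adj u, P y) :
    ∀ {s x : V} {xs : List V}, IsNWalk adj s xs x → P s → P x
  | _, _, [], h, hs => (h : _ = _) ▸ hs
  | _, _, _ :: _, h, hs => IsNWalk.mem_of_closed hP h.2 (hP _ hs _ h.1)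

end Reachability

section BFS
variable {V : Type} [DecidableEq V] (adj : V → List V)

def bfsNews (u : V) (vis : List V) : List V :=
  ((adj u).filter (fun x => !vis.contains x)).dedup

theorem mem_bfsNews {u x : V} {vis : List V} : x ∈ bfsNews adj u vis ↔ x ∈ adj u ∧ x ∉ vis := by
  simp [bfsNews]

theorem nodup_append_bfsNews {u : V} {vis : List V} (h : vis.Nodup) :
    (vis ++ bfsNews adj u vis).Nodup :=
  h.append (List.nodup_dedup _) fun _ ha hb => ((mem_bfsNews adj).mp hb).2 ha

theorem bfsAux_nil (fuel : ℕ) (vis : List V) : bfsAux adj fuel [] vis = [] := by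
  cases fuel <;> rfl

theorem bfsAux_succ_cons (fuel : ℕ) (u : V) (qs vis : List V) :
    bfsAux adj (fuel + 1) (u :: qs) vis =
      u :: bfsAux adj fuel (qs ++ bfsNews adj u vis) (vis ++ bfsNews adj u vis) :=
  rfl

theorem bfsAux_forall_of_closed {P : V → Prop} (hP : ∀ u, P u → ∀ y ∈ adj u, P y) :
    ∀ (fuel : ℕ) (qs vis : List V), (∀ u ∈ qs, P u) → ∀ x ∈ bfsAux adj fuel qs vis, P x
  | 0, _, _, _ => by simp [bfsAux]
  | _ + 1, [], _, _ => by simp [bfsAux]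
  | fuel + 1, u :: qs, vis, hqs => by
    rw [bfsAux_succ_cons]
    refine List.forall_mem_cons.mpr ⟨hqs u List.mem_cons_self, ?_⟩
    refine bfsAux_forall_of_closed hP fuel _ _ fun w hw => ?_
    rcases List.mem_append.mp hw with hw | hw
    · exact hqs w (List.mem_cons_of_mem u hw)
    · exact hP u (hqs u List.mem_cons_self) w ((mem_bfsNews adj).mp hw).1

theorem bfsNews_closed {u : V} {vis done : List V} (hdone : ∀ w ∈ done, ∀ y ∈ adj w, y ∈ vis) :
    ∀ w ∈ done ++ [u], ∀ y ∈ adj w, y ∈ vis ++ bfsNews adj u vis := by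
  intro w hw y hy
  rcases List.mem_append.mp hw with hw | hw
  · exact List.mem_append_left _ (hdone w hw y hy)
  · obtain rfl := List.mem_singleton.mp hw
    by_cases hyv : y ∈ vis
    · exact List.mem_append_left _ hyv
    · exact List.mem_append_right _ ((mem_bfsNews adj).mpr ⟨hy, hyv⟩)

/-- The BFS invariant: `done` are the expanded nodes, `qs` the queue, `vis` the visited ones. -/
theorem bfsAux_closed [Fintype V] :
    ∀ (fuel : ℕ) (qs vis done : List V), vis.Perm (done ++ qs) → vis.Nodup →
      qs.length + (Fintype.card V - vis.length) ≤ fuel → (∀ u ∈ done, ∀ y ∈ adj u, y ∈ vis) →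
      vis ⊆ done ++ bfsAux adj fuel qs vis ∧
        ∀ u ∈ done ++ bfsAux adj fuel qs vis, ∀ y ∈ adj u, y ∈ done ++ bfsAux adj fuel qs vis
  | fuel, [], vis, done, hperm, _, _, hdone => by
    simp only [bfsAux_nil, List.append_nil] at hperm ⊢
    exact ⟨fun x hx => hperm.mem_iff.mp hx, fun u hu y hy => hperm.mem_iff.mp (hdone u hu y hy)⟩
  | 0, _ :: _, _, _, _, _, hfuel, _ => by simp at hfuel
  | fuel + 1, u :: qs, vis, done, hperm, hnd, hfuel, hdone => by
    have hnd' := nodup_append_bfsNews adj (u := u) hnd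
    have hcard : (vis ++ bfsNews adj u vis).length ≤ Fintype.card V := hnd'.length_le_card
    rw [List.length_append] at hcard
    rw [List.length_cons] at hfuel
    have hperm' : (vis ++ bfsNews adj u vis).Perm ((done ++ [u]) ++ (qs ++ bfsNews adj u vis)) := by
      simpa using hperm.append_right (bfsNews adj u vis)
    have h := bfsAux_closed fuel (qs ++ bfsNews adj u vis) _ (done ++ [u]) hperm' hnd'
      (by simp only [List.length_append]; omega) (bfsNews_closed adj hdone)
    rw [bfsAux_succ_cons, ← List.singleton_append, ← List.append_assoc]
    exact ⟨fun x hx => h.1 (List.mem_append_left _ hx), h.2⟩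

theorem mem_bfsOrder_iff [Fintype V] (s x : V) :
    x ∈ bfsOrder adj s ↔ ∃ xs, IsNWalk adj s xs x := by
  constructor
  · have hreach : ∀ u, (∃ xs, IsNWalk adj s xs u) → ∀ y ∈ adj u, ∃ xs, IsNWalk adj s xs y :=
      fun u ⟨xs, hxs⟩ y hy => ⟨xs ++ [y], hxs.snoc adj hy⟩
    refine bfsAux_forall_of_closed adj hreach _ [s] [s] ?_ x
    simp only [List.mem_singleton, forall_eq]
    exact ⟨[], rfl⟩
  · rintro ⟨xs, hxs⟩
    have hcard : 0 < Fintype.card V := Fintype.card_pos_iff.mpr ⟨s⟩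
    obtain ⟨hvis, hclosed⟩ := bfsAux_closed adj (Fintype.card V + 1) [s] [s] []
      (List.Perm.refl _) (List.nodup_singleton s) (by simp only [List.length_singleton]; omega)
      (by simp)
    rw [List.nil_append] at hvis hclosed
    exact hxs.mem_of_closed adj hclosed (hvis List.mem_cons_self)

end BFS

section Product
variable {V E Q S : Type} (G : GraphDB V E S) (A : NFAx Q S) (adj : V × Q → List (V × Q))

theorem IsNWalk.exists_walk_run
    (hadj : ∀ x y : V × Q, y ∈ adj x →
      ∃ e : ProdE G A, (ProdGraph G A).src e = x ∧ (ProdGraph G A).tgt e = y) :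
    ∀ {p p' : V × Q} {xs : List (V × Q)}, IsNWalk adj p xs p' →
      ∃ es : List E, G.IsWalk p.1 es p'.1 ∧ A.Run p.2 (es.map G.lab) p'.2
  | _, _, [], h => (h : _ = _) ▸ ⟨[], rfl, NFAx.Run.nil _⟩
  | p, _, _ :: _, h => by
    obtain ⟨⟨⟨e, q, a, q'⟩, hδ, hlab⟩, hsrc, rfl⟩ := hadj _ _ h.1
    obtain ⟨es, hwalk, hrun⟩ := IsNWalk.exists_walk_run hadj h.2
    obtain rfl : (G.src e, q) = p := hsrc
    refine ⟨e :: es, ⟨rfl, hwalk⟩, NFAx.Run.cons ?_ hrun⟩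
    show (q, G.lab e, q') ∈ A.δ
    rwa [hlab]

theorem GraphDB.IsWalk.exists_isNWalk
    (hadj : ∀ x y : V × Q,
      (∃ e : ProdE G A, (ProdGraph G A).src e = x ∧ (ProdGraph G A).tgt e = y) → y ∈ adj x) :
    ∀ {v v' : V} {q q' : Q} {es : List E}, G.IsWalk v es v' → A.Run q (es.map G.lab) q' →
      ∃ xs, IsNWalk adj (v, q) xs (v', q')
  | _, _, _, _, [], hw, .nil _ => (hw : _ = _) ▸ ⟨[], rfl⟩
  | _, _, _, _, e :: _, ⟨rfl, hw⟩, .cons (q' := qm) hδ hr => by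
    obtain ⟨xs, hxs⟩ := GraphDB.IsWalk.exists_isNWalk hadj hw hr
    exact ⟨(G.tgt e, qm) :: xs, hadj _ _ ⟨⟨(e, _, G.lab e, qm), hδ, rfl⟩, rfl, rfl⟩, hxs⟩

end Product

/-- the ANY WALK algorithm (graph search on the product graph from `(v,q₀)`,
recording `v'` in `ReachedFinal` the first time some `(v',q')` with `q' ∈ F` is reached)
computes `ReachedFinal = { v' | ∃ path from v to v' with label in L(regex) }`, and outputs
exactly one such path per element of `ReachedFinal`. -/
theorem anyWalk_correct {V E Q S : Type} [DecidableEq V] [DecidableEq Q]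
    [Fintype V] [Fintype Q] (G : GraphDB V E S) (A : NFAx Q S) (v : V)
    (adj : V × Q → List (V × Q))
    (hadj : ∀ x y : V × Q, y ∈ adj x ↔
      ∃ e : ProdE G A, (ProdGraph G A).src e = x ∧ (ProdGraph G A).tgt e = y) :
    {v' : V | ∃ q' ∈ A.F, (v', q') ∈ bfsOrder adj (v, A.q0)} =
      {v' : V | ∃ es : List E, G.IsWalk v es v' ∧ es.map G.lab ∈ A.Lang} ∧
    ∃ sol : V → List E, ∀ v' ∈ {v' : V | ∃ q' ∈ A.F, (v', q') ∈ bfsOrder adj (v, A.q0)},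
      G.IsWalk v (sol v') v' ∧ (sol v').map G.lab ∈ A.Lang := by
  have hreached : {v' : V | ∃ q' ∈ A.F, (v', q') ∈ bfsOrder adj (v, A.q0)} =
      {v' : V | ∃ es : List E, G.IsWalk v es v' ∧ es.map G.lab ∈ A.Lang} := by
    ext v'
    simp only [Set.mem_ofPred_eq, mem_bfsOrder_iff, NFAx.Lang]
    constructor
    · rintro ⟨q', hF, xs, hxs⟩
      obtain ⟨es, hwalk, hrun⟩ := hxs.exists_walk_run G A adj fun x y => (hadj x y).mp
      exact ⟨es, hwalk, q', hF, hrun⟩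
    · rintro ⟨es, hwalk, q', hF, hrun⟩
      exact ⟨q', hF, hwalk.exists_isNWalk G A adj (fun x y => (hadj x y).mpr) hrun⟩
  refine ⟨hreached, fun v' => Classical.epsilon fun es => G.IsWalk v es v' ∧ es.map G.lab ∈ A.Lang,
    fun v' hv' => ?_⟩
  exact Classical.epsilon_spec (hreached ▸ hv')
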